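/- arXiv:2106.00367 — 14 statements merged into one kernel-verified Lean document; each statement's English description precedes it below -/
import Mathlib

section
/- Let A be an associative algebra over a field k satisfying the left commutativity identity abc = bac (a Perm-algebra), and let d be a derivation of A. Then the new product a ∘ b = a·d(b) satisfies the left-symmetric (pre-Lie) identity: (a∘b)∘c − a∘(b∘c) = (b∘a)∘c − b∘(a∘c) for all a,b,c in A. -/
/-- A Perm-algebra (associative, `a*b*c = b*a*c`) with a derivation `d` is
left-symmetric (pre-Lie) under `a ∘ b = a * d b`. -/
theorem perm_der_leftSymmetric (k A : Type) [Field k] [NonUnitalRing A]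
    [Module k A] [IsScalarTower k A A] [SMulCommClass k A A]
    (perm : ∀ a b c : A, a * b * c = b * a * c)
    (d : A →ₗ[k] A) (hd : ∀ a b : A, d (a * b) = d a * b + a * d b) :
    ∀ a b c : A,
      (a * d b) * d c - a * d (b * d c) = (b * d a) * d c - b * d (a * d c) := by
  intro a b c
  rw [hd, hd, mul_add, mul_add, ← mul_assoc, ← mul_assoc, ← mul_assoc, ← mul_assoc]
  rw [perm a (d b) (d c), perm b (d a) (d c), perm a b (d (d c))]
  abel
end

section
/- Let P be a Perm-algebra (associative algebra with identity xyz = yxz) with a derivation d, and define x ∘ y = x·d(y). Then P satisfies the identity ((x∘y)∘z)∘u = ((x∘z)∘y)∘u for all x,y,z,u ∈ P. -/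
/-- In a differential Perm-algebra with `x ∘ y = x * d y`, the identity
`((x∘y)∘z)∘u = ((x∘z)∘y)∘u` holds. -/
theorem perm_der_SLS1 (k P : Type) [Field k] [NonUnitalRing P]
    [Module k P] [IsScalarTower k P P] [SMulCommClass k P P]
    (perm : ∀ a b c : P, a * b * c = b * a * c)
    (d : P →ₗ[k] P) (hd : ∀ a b : P, d (a * b) = d a * b + a * d b) :
    ∀ x y z u : P,
      ((x * d y) * d z) * d u = ((x * d z) * d y) * d u := by
  intro x y z u
  rw [perm (x * d y) (d z) (d u), ← mul_assoc, perm (d z) x (d y)]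
end

section
/- Let P be a Perm-algebra with a derivation d, and define x ∘ y = x·d(y). Then P satisfies the identity (x, y∘z, u) = (y, x∘z, u) for all x,y,z,u ∈ P, where (a,b,c) = (a∘b)∘c − a∘(b∘c) is the associator with respect to ∘. -/
/-- In a differential Perm-algebra with `x ∘ y = x * d y`, the identity
`(x, y∘z, u) = (y, x∘z, u)` holds, where `(a,b,c) = (a∘b)∘c - a∘(b∘c)`. -/
theorem perm_der_SLS2 (k P : Type) [Field k] [NonUnitalRing P]
    [Module k P] [IsScalarTower k P P] [SMulCommClass k P P]
    (perm : ∀ a b c : P, a * b * c = b * a * c)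
    (d : P →ₗ[k] P) (hd : ∀ a b : P, d (a * b) = d a * b + a * d b) :
    ∀ x y z u : P,
      (x * d (y * d z)) * d u - x * d ((y * d z) * d u)
        = (y * d (x * d z)) * d u - y * d ((x * d z) * d u) := by
  intro x y z u
  simp only [hd, mul_add, add_mul, mul_assoc]
  have h := perm x y (d z * d (d u))
  simp only [mul_assoc] at h
  abel_nf
  rw [h]
end

section
/- Let P be a Perm-algebra with a derivation d. Define x ⊢ y = x·d(y) and x ⊣ y = d(y)·x. Then the 0-identities hold: (x ⊣ y) ⊢ z = (x ⊢ y) ⊢ z and x ⊣ (y ⊢ z) = x ⊣ (y ⊣ z) for all x,y,z ∈ P. -/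
/-- In a differential Perm-algebra with `x ⊢ y = x * d y`, `x ⊣ y = d y * x`,
the 0-identities hold. -/
theorem perm_der_zero_identities (k P : Type) [Field k] [NonUnitalRing P]
    [Module k P] [IsScalarTower k P P] [SMulCommClass k P P]
    (perm : ∀ a b c : P, a * b * c = b * a * c)
    (d : P →ₗ[k] P) (hd : ∀ a b : P, d (a * b) = d a * b + a * d b) :
    (∀ x y z : P, (d y * x) * d z = (x * d y) * d z) ∧
    (∀ x y z : P, d (y * d z) * x = d (d z * y) * x) := by
  constructor
  · intro x y z; exact perm _ _ _
  · intro x y z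
    rw [hd, hd, add_mul, add_mul, perm (d y) (d z) x, perm y (d (d z)) x, add_comm]
end

section
/- Let P be a Perm-algebra with a derivation d. Define x ⊢ y = x·d(y) and x ⊣ y = d(y)·x. Then (P, ⊢, ⊣) is a Novikov dialgebra: it satisfies the 0-identities (x⊣y)⊢z = (x⊢y)⊢z, x⊣(y⊢z) = x⊣(y⊣z), the left-symmetric dialgebra identities (x⊣y)⊣z − x⊣(y⊣z) = (y⊢x)⊣z − y⊢(x⊣z) and (x⊢y)⊢z − x⊢(y⊢z) = (y⊢x)⊢z − y⊢(x⊢z), and the right commutativity identities (x⊣y)⊣z = (x⊣z)⊣y and (x⊢y)⊣z = (x⊢z)⊢y. -/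
/-- A differential Perm-algebra is a Novikov dialgebra under
`x ⊢ y = x * d y`, `x ⊣ y = d y * x`: the six defining identities hold. -/
theorem perm_der_novikov_dialgebra (k P : Type) [Field k] [NonUnitalRing P]
    [Module k P] [IsScalarTower k P P] [SMulCommClass k P P]
    (perm : ∀ a b c : P, a * b * c = b * a * c)
    (d : P →ₗ[k] P) (hd : ∀ a b : P, d (a * b) = d a * b + a * d b) :
    (∀ x y z : P, (d y * x) * d z = (x * d y) * d z) ∧
    (∀ x y z : P, d (y * d z) * x = d (d z * y) * x) ∧
    (∀ x y z : P,
      d z * (d y * x) - d (d z * y) * x = d z * (y * d x) - y * d (d z * x)) ∧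
    (∀ x y z : P,
      (x * d y) * d z - x * d (y * d z) = (y * d x) * d z - y * d (x * d z)) ∧
    (∀ x y z : P, d z * (d y * x) = d y * (d z * x)) ∧
    (∀ x y z : P, d z * (x * d y) = (x * d z) * d y) := by
  have h : ∀ a b c : P, a * (b * c) = b * (a * c) := fun a b c => by
    rw [← mul_assoc, ← mul_assoc, perm]
  refine ⟨fun x y z => perm _ _ _, fun x y z => ?_, fun x y z => ?_, fun x y z => ?_,
    fun x y z => h _ _ _, fun x y z => ?_⟩
  · simp only [hd, add_mul, ← mul_assoc]
    rw [perm (d y) (d z), perm y (d (d z))]; abel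
  · simp only [hd, add_mul, mul_add, mul_sub, ← mul_assoc]
    rw [perm (d z) (d y) x, perm y (d z) (d x), perm (d (d z)) y x]
    abel
  · simp only [hd, add_mul, mul_add, mul_sub, ← mul_assoc]
    rw [perm x (d y) (d z), perm y (d x) (d z), perm x y (d (d z))]
    abel
  · rw [← mul_assoc, perm, mul_assoc, ← mul_assoc]
end

section
/- Let N̂ be a Novikov algebra over a field k and let H be a commutative associative unital k-algebra with an algebra homomorphism ε: H → k (e.g. H = k[T] with ε(T)=0). On Cur N̂ = H ⊗ N̂ define (f⊗x) ⊢ (g⊗y) = ε(f)·(g ⊗ x∘y) and (f⊗x) ⊣ (g⊗y) = ε(g)·(f ⊗ x∘y). Then (Cur N̂, ⊢, ⊣) is a Novikov dialgebra. -/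
open TensorProduct

/-- The current dialgebra `Cur N̂ = H ⊗ N̂` over a Novikov algebra `N̂`, with
`(f⊗x) ⊢ (g⊗y) = ε(f) • (g ⊗ x∘y)` and `(f⊗x) ⊣ (g⊗y) = ε(g) • (f ⊗ x∘y)`,
is a Novikov dialgebra. -/
theorem current_novikov_dialgebra (k H Nhat : Type) [Field k]
    [CommRing H] [Algebra k H] (ε : H →ₐ[k] k)
    [AddCommGroup Nhat] [Module k Nhat]
    (mul : Nhat →ₗ[k] Nhat →ₗ[k] Nhat)
    (lsym : ∀ a b c : Nhat,
      mul (mul a b) c - mul a (mul b c) = mul (mul b a) c - mul b (mul a c))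
    (rcom : ∀ a b c : Nhat, mul (mul a b) c = mul (mul a c) b)
    (vd dv : (H ⊗[k] Nhat) →ₗ[k] (H ⊗[k] Nhat) →ₗ[k] (H ⊗[k] Nhat))
    (hvd : ∀ (f g : H) (x y : Nhat),
      vd (f ⊗ₜ[k] x) (g ⊗ₜ[k] y) = ε f • (g ⊗ₜ[k] mul x y))
    (hdv : ∀ (f g : H) (x y : Nhat),
      dv (f ⊗ₜ[k] x) (g ⊗ₜ[k] y) = ε g • (f ⊗ₜ[k] mul x y)) :
    (∀ x y z : H ⊗[k] Nhat, vd (dv x y) z = vd (vd x y) z) ∧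
    (∀ x y z : H ⊗[k] Nhat, dv x (vd y z) = dv x (dv y z)) ∧
    (∀ x y z : H ⊗[k] Nhat,
      dv (dv x y) z - dv x (dv y z) = dv (vd y x) z - vd y (dv x z)) ∧
    (∀ x y z : H ⊗[k] Nhat,
      vd (vd x y) z - vd x (vd y z) = vd (vd y x) z - vd y (vd x z)) ∧
    (∀ x y z : H ⊗[k] Nhat, dv (dv x y) z = dv (dv x z) y) ∧
    (∀ x y z : H ⊗[k] Nhat, dv (vd x y) z = vd (vd x z) y) := by
  refine ⟨?_, ?_, ?_, ?_, ?_, ?_⟩ <;> intro x y z <;>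
  induction x using TensorProduct.induction_on with
  | zero => simp
  | add a b ha hb =>
      simp only [map_add, LinearMap.add_apply]
      first
        | rw [← sub_add_sub_comm, ← sub_add_sub_comm, ha, hb]
        | rw [ha, hb]
  | tmul f xx =>
      induction y using TensorProduct.induction_on with
      | zero => simp
      | add a b ha hb =>
          simp only [map_add, LinearMap.add_apply]
          first
            | rw [← sub_add_sub_comm, ← sub_add_sub_comm, ha, hb]
            | rw [ha, hb]
      | tmul g yy =>
          induction z using TensorProduct.induction_on with
          | zero => simp
          | add a b ha hb =>
              simp only [map_add, LinearMap.add_apply]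
              first
                | rw [← sub_add_sub_comm, ← sub_add_sub_comm, ha, hb]
                | rw [ha, hb]
          | tmul h zz =>
              simp only [hvd, hdv, map_smul, LinearMap.smul_apply, smul_smul,
                mul_comm]
              all_goals first
                | rw [← tmul_smul, ← tmul_smul, ← tmul_smul, ← tmul_smul, ← tmul_sub, ← tmul_sub, ← smul_sub, ← smul_sub, lsym]
                | rw [rcom]
                | rfl
end

section
/- Let B be a commutative associative algebra over a field k with a derivation d, and let H be a commutative associative unital k-algebra with algebra homomorphism ε: H → k. On C = H ⊗ B define the product (f⊗x)·(g⊗y) = ε(f)·(g ⊗ xy). Then C is a Perm-algebra (associative with xyz = yxz), and the map id ⊗ d is a derivation of C. -/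
open TensorProduct

/-- For a commutative differential algebra `(B, d)`, the space `C = H ⊗ B` with
product `(f⊗x)·(g⊗y) = ε(f) • (g ⊗ x*y)` is a Perm-algebra (associative and
left-commutative), and `id ⊗ d` is a derivation of `C`. -/
theorem current_perm_differential (k H B : Type) [Field k]
    [CommRing H] [Algebra k H] (ε : H →ₐ[k] k)
    [NonUnitalCommRing B] [Module k B] [IsScalarTower k B B] [SMulCommClass k B B]
    (d : B →ₗ[k] B) (hd : ∀ x y : B, d (x * y) = d x * y + x * d y)
    (mulC : (H ⊗[k] B) →ₗ[k] (H ⊗[k] B) →ₗ[k] (H ⊗[k] B))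
    (hmulC : ∀ (f g : H) (x y : B),
      mulC (f ⊗ₜ[k] x) (g ⊗ₜ[k] y) = ε f • (g ⊗ₜ[k] (x * y))) :
    (∀ u v w : H ⊗[k] B, mulC (mulC u v) w = mulC u (mulC v w)) ∧
    (∀ u v w : H ⊗[k] B, mulC (mulC u v) w = mulC (mulC v u) w) ∧
    (∀ u v : H ⊗[k] B,
      LinearMap.lTensor H d (mulC u v)
        = mulC (LinearMap.lTensor H d u) v + mulC u (LinearMap.lTensor H d v)) := by
  refine ⟨?_, ?_, ?_⟩
  · intro u v w
    induction u using TensorProduct.induction_on with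
    | zero => simp
    | add a b ha hb => simp [ha, hb]
    | tmul f x =>
      induction v using TensorProduct.induction_on with
      | zero => simp
      | add a b ha hb => simp [ha, hb]
      | tmul g y =>
        induction w using TensorProduct.induction_on with
        | zero => simp
        | add a b ha hb => simp [ha, hb]
        | tmul h z =>
          simp only [hmulC, map_smul, LinearMap.smul_apply, smul_smul, mul_assoc]
          rw [mul_comm (ε f) (ε g)]
  · intro u v w
    induction u using TensorProduct.induction_on with
    | zero => simp
    | add a b ha hb => simp [ha, hb]
    | tmul f x =>
      induction v using TensorProduct.induction_on with
      | zero => simp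
      | add a b ha hb => simp [ha, hb]
      | tmul g y =>
        induction w using TensorProduct.induction_on with
        | zero => simp
        | add a b ha hb => simp [ha, hb]
        | tmul h z =>
          simp only [hmulC, map_smul, LinearMap.smul_apply, smul_smul]
          rw [mul_comm (ε f) (ε g), mul_comm x y]
  · intro u v
    induction u using TensorProduct.induction_on with
    | zero => simp
    | add a b ha hb =>
      simp only [map_add, LinearMap.add_apply, ha, hb]; abel
    | tmul f x =>
      induction v using TensorProduct.induction_on with
      | zero => simp
      | add a b ha hb =>
        simp only [map_add, ha, hb]; abel
      | tmul g y =>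
        simp only [hmulC, LinearMap.lTensor_tmul, map_smul, hd, TensorProduct.tmul_add,
          smul_add]
end

section
/- Let (A, ∘) be a left-symmetric algebra. Then T(A) equipped with the operations u ⊢ a = M(u)∘a (a ∈ A), u ⊢ (wa) = (u⊢w)a + w(M(u)∘a) − wM(u)a, and u ⊣ w = u·M(w) is a left-symmetric dialgebra: it satisfies (x⊣y)⊢z = (x⊢y)⊢z, x⊣(y⊢z) = x⊣(y⊣z), (x⊣y)⊣z − x⊣(y⊣z) = (y⊢x)⊣z − y⊢(x⊣z), and (x⊢y)⊢z − x⊢(y⊢z) = (y⊢x)⊢z − y⊢(x⊢z). -/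
lemma adjoin_right_induction {k T : Type} [Field k] [NonUnitalRing T] [Module k T]
    [IsScalarTower k T T] [SMulCommClass k T T] {s : Set T}
    (hgen : NonUnitalAlgebra.adjoin k s = ⊤) (P : T → Prop)
    (h0 : P 0) (hadd : ∀ x y, P x → P y → P (x + y))
    (hsmul : ∀ (c : k) (x), P x → P (c • x))
    (hbase : ∀ x ∈ s, P x)
    (hstep : ∀ z, ∀ x ∈ s, P z → P (z * x)) : ∀ z, P z := by
  let W : NonUnitalSubalgebra k T :=
    { carrier := {y | P y ∧ ∀ z, P z → P (z * y)}
      add_mem' := fun {a b} ha hb =>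
        ⟨hadd _ _ ha.1 hb.1, fun z hz => by
          rw [mul_add]; exact hadd _ _ (ha.2 z hz) (hb.2 z hz)⟩
      zero_mem' := ⟨h0, fun z hz => by rw [mul_zero]; exact h0⟩
      mul_mem' := fun {a b} ha hb =>
        ⟨hb.2 a ha.1, fun z hz => by rw [← mul_assoc]; exact hb.2 _ (ha.2 z hz)⟩
      smul_mem' := fun c x hx =>
        ⟨hsmul c x hx.1, fun z hz => by rw [mul_smul_comm]; exact hsmul _ _ (hx.2 z hz)⟩ }
  have hle : NonUnitalAlgebra.adjoin k s ≤ W :=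
    NonUnitalAlgebra.adjoin_le (fun x hx => ⟨hbase x hx, fun z hz => hstep z x hx hz⟩)
  intro z
  have hz : z ∈ NonUnitalAlgebra.adjoin k s := by rw [hgen]; trivial
  exact (hle hz).1

/-- For a left-symmetric algebra `(A, ∘)`, the non-unital tensor algebra
`T = T(A)` equipped with `u ⊢ ι a = ι(M u ∘ a)`,
`u ⊢ (w·ι a) = (u⊢w)·ι a + w·ι(M u ∘ a) - w·ι(M u)·ι a`, and `u ⊣ w = u·ι(M w)`
is a left-symmetric dialgebra: the two 0-identities and the two
di-left-symmetric identities hold. -/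
theorem tensor_leftSymmetric_dialgebra (k A T : Type) [Field k]
    [AddCommGroup A] [Module k A]
    [NonUnitalRing T] [Module k T] [IsScalarTower k T T] [SMulCommClass k T T]
    (mul : A →ₗ[k] A →ₗ[k] A)
    (lsym : ∀ a b c : A,
      mul (mul a b) c - mul a (mul b c) = mul (mul b a) c - mul b (mul a c))
    (ι : A →ₗ[k] T)
    (hgen : NonUnitalAlgebra.adjoin k (Set.range ι) = ⊤)
    (M : T →ₗ[k] A)
    (hM1 : ∀ a : A, M (ι a) = a)
    (hM2 : ∀ (u : T) (a : A), M (u * ι a) = mul (M u) a)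
    (vd : T →ₗ[k] T →ₗ[k] T)
    (hv1 : ∀ (u : T) (a : A), vd u (ι a) = ι (mul (M u) a))
    (hv2 : ∀ (u w : T) (a : A),
      vd u (w * ι a) = vd u w * ι a + w * ι (mul (M u) a) - w * ι (M u) * ι a) :
    (∀ x y z : T, vd (x * ι (M y)) z = vd (vd x y) z) ∧
    (∀ x y z : T, x * ι (M (vd y z)) = x * ι (M (y * ι (M z)))) ∧
    (∀ x y z : T,
      (x * ι (M y)) * ι (M z) - x * ι (M (y * ι (M z)))
        = vd y x * ι (M z) - vd y (x * ι (M z))) ∧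
    (∀ x y z : T,
      vd (vd x y) z - vd x (vd y z) = vd (vd y x) z - vd y (vd x z)) := by
  -- Lemma A : M (vd u z) = mul (M u) (M z)
  have hA : ∀ z u : T, M (vd u z) = mul (M u) (M z) := by
    refine adjoin_right_induction hgen (fun z => ∀ u, M (vd u z) = mul (M u) (M z)) ?_ ?_ ?_ ?_ ?_
    · intro u; simp
    · intro z₁ z₂ h1 h2 u; simp [h1 u, h2 u]
    · intro c z h u; simp [h u]
    · rintro _ ⟨a, rfl⟩ u; rw [hv1, hM1, hM1]
    · rintro z _ ⟨a, rfl⟩ h u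
      rw [hv2, map_sub, map_add, hM2, hM2, hM2, h u, hM2, hM2]
      linear_combination (norm := abel) lsym (M u) (M z) a
  -- Lemma C : vd u z depends only on M u
  have hC : ∀ z u u' : T, M u = M u' → vd u z = vd u' z := by
    refine adjoin_right_induction hgen (fun z => ∀ u u', M u = M u' → vd u z = vd u' z) ?_ ?_ ?_ ?_ ?_
    · intro u u' _; simp
    · intro z₁ z₂ h1 h2 u u' h; rw [map_add, map_add, h1 u u' h, h2 u u' h]
    · intro c z hz u u' h; rw [map_smul, map_smul, hz u u' h]
    · rintro _ ⟨a, rfl⟩ u u' h; rw [hv1, hv1, h]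
    · rintro z _ ⟨a, rfl⟩ hz u u' h; rw [hv2, hv2, h, hz u u' h]
  refine ⟨?_, ?_, ?_, ?_⟩
  · intro x y z
    apply hC
    rw [hM2, hA]
  · intro x y z
    rw [hA, hM2]
  · intro x y z
    rw [hv2, hM2]
    abel
  · -- di-left-symmetry, by induction on z
    intro x y z
    revert x y
    refine adjoin_right_induction hgen
      (fun z => ∀ x y, vd (vd x y) z - vd x (vd y z) = vd (vd y x) z - vd y (vd x z))
      ?_ ?_ ?_ ?_ ?_ z
    · intro x y; simp
    · intro z₁ z₂ h1 h2 x y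
      rw [map_add, map_add, map_add, map_add, map_add, map_add]
      linear_combination (norm := abel) h1 x y + h2 x y
    · intro c z hz x y
      rw [map_smul, map_smul, map_smul, map_smul, map_smul, map_smul, ← smul_sub, ← smul_sub,
        hz x y]
    · rintro _ ⟨a, rfl⟩ x y
      rw [hv1, hv1, hv1, hv1, hv1, hv1, hA, hA, ← map_sub, ← map_sub]
      exact congrArg ι (lsym _ _ _)
    · rintro z _ ⟨a, rfl⟩ hz x y
      have e1 : ∀ p q : T, vd (vd p q) (z * ι a)
          = vd (vd p q) z * ι a + z * ι (mul (mul (M p) (M q)) a)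
            - z * ι (mul (M p) (M q)) * ι a := by
        intro p q; rw [hv2, hA]
      have e2 : ∀ p q : T, vd p (vd q (z * ι a))
          = vd p (vd q z) * ι a + vd q z * ι (mul (M p) a) - vd q z * ι (M p) * ι a
            + (vd p z * ι (mul (M q) a) + z * ι (mul (M p) (mul (M q) a))
                - z * ι (M p) * ι (mul (M q) a))
            - (vd p z * ι (M q) * ι a + z * ι (mul (M p) (M q)) * ι a
                - z * ι (M p) * ι (M q) * ι a
                + (z * ι (M q) * ι (mul (M p) a) - z * ι (M q) * ι (M p) * ι a)) := by
        intro p q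
        rw [hv2 q z a, map_sub, map_add, hv2 p (vd q z) a, hv2 p z (mul (M q) a),
          hv2 p (z * ι (M q)) a, hv2 p z (M q)]
        simp only [add_mul, sub_mul]
        abel
      rw [e1 x y, e1 y x, e2 x y, e2 y x]
      have key : z * ι (mul (mul (M x) (M y)) a) - z * ι (mul (M x) (mul (M y) a))
          = z * ι (mul (mul (M y) (M x)) a) - z * ι (mul (M y) (mul (M x) a)) := by
        rw [← mul_sub, ← map_sub ι, lsym, map_sub, mul_sub]
      have ih := congrArg (· * ι a) (hz x y)
      simp only [sub_mul] at ih
      linear_combination (norm := abel) key + ih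
end

section
/- Let (A, ∘) be a left-symmetric algebra, D(A) = (T(A), ⊢, ⊣) its tensor-algebra dialgebra, and let B be any left-symmetric dialgebra with a left-symmetric algebra homomorphism τ: A → (B, ⊢). Then there exists a unique dialgebra homomorphism φ: D(A) → B with φ(a) = τ(a) for all a ∈ A; explicitly φ(a₁a₂…aₙ) = (…((τ(a₁) ⊣ τ(a₂)) ⊣ …) ⊣ τ(aₙ)). -/
set_option linter.unusedSectionVars false

section TDUaux

variable {k A T B : Type} [Field k]
    [AddCommGroup A] [Module k A]
    [NonUnitalRing T] [Module k T] [IsScalarTower k T T] [SMulCommClass k T T]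
    [AddCommGroup B] [Module k B]

/-- The left-normed monomial `ι a₁ * ⋯ * ι aₙ`. -/
def TDUmon (ι : A →ₗ[k] T) (a : A) (l : List A) : T :=
  List.foldl (fun t x => t * ι x) (ι a) l

theorem TDUmon_concat (ι : A →ₗ[k] T) (a : A) (l : List A) (c : A) :
    TDUmon ι a (l ++ [c]) = TDUmon ι a l * ι c := by
  simp [TDUmon, List.foldl_append]

theorem TDUmon_mul (ι : A →ₗ[k] T) (a b : A) (l m : List A) :
    TDUmon ι a l * TDUmon ι b m = TDUmon ι a (l ++ b :: m) := by
  induction m using List.reverseRecOn with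
  | nil => exact (TDUmon_concat ι a l b).symm
  | append_singleton m c IH =>
    rw [TDUmon_concat, ← mul_assoc, IH, ← TDUmon_concat]
    congr 1
    simp

theorem TDUspan (ι : A →ₗ[k] T)
    (hgen : NonUnitalAlgebra.adjoin k (Set.range ι) = ⊤) :
    Submodule.span k {u : T | ∃ a l, u = TDUmon ι a l} = ⊤ := by
  set s : Set T := {u : T | ∃ a l, u = TDUmon ι a l} with hs
  have hmul : ∀ x y : T, x ∈ Submodule.span k s → y ∈ Submodule.span k s →
      x * y ∈ Submodule.span k s := by
    intro x y hx hy
    induction hx using Submodule.span_induction with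
    | mem x hxs =>
      induction hy using Submodule.span_induction with
      | mem y hys =>
        obtain ⟨a, l, rfl⟩ := hxs
        obtain ⟨b, m, rfl⟩ := hys
        exact Submodule.subset_span ⟨a, l ++ b :: m, TDUmon_mul ι a b l m⟩
      | zero => rw [mul_zero]; exact Submodule.zero_mem _
      | add y z hy hz ihy ihz => rw [mul_add]; exact Submodule.add_mem _ ihy ihz
      | smul c y hy ihy => rw [mul_smul_comm]; exact Submodule.smul_mem _ _ ihy
    | zero => rw [zero_mul]; exact Submodule.zero_mem _
    | add x x' hx hx' ih ih' => rw [add_mul]; exact Submodule.add_mem _ ih ih'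
    | smul c x hx ih => rw [smul_mul_assoc]; exact Submodule.smul_mem _ _ ih
  have hle : NonUnitalAlgebra.adjoin k (Set.range ι) ≤
      (Submodule.span k s).toNonUnitalSubalgebra hmul := by
    apply NonUnitalAlgebra.adjoin_le
    rintro x ⟨a, rfl⟩
    exact Submodule.subset_span ⟨a, [], rfl⟩
  rw [hgen] at hle
  exact eq_top_iff.mpr fun x _ => hle trivial

theorem TDUext {W : Type} [AddCommGroup W] [Module k W] (ι : A →ₗ[k] T)
    (hgen : NonUnitalAlgebra.adjoin k (Set.range ι) = ⊤) (f g : T →ₗ[k] W)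
    (h : ∀ a l, f (TDUmon ι a l) = g (TDUmon ι a l)) : f = g := by
  apply LinearMap.ext_on (TDUspan ι hgen)
  rintro x ⟨a, l, rfl⟩
  exact h a l

/-- The representation of a generator on `B × A × k`. -/
def TDUE (mul : A →ₗ[k] A →ₗ[k] A) (dvB : B →ₗ[k] B →ₗ[k] B) (τ : A →ₗ[k] B) :
    A →ₗ[k] Module.End k (B × A × k) where
  toFun a :=
    { toFun := fun v => (dvB v.1 (τ a) + v.2.2 • τ a, mul v.2.1 a + v.2.2 • a, 0)
      map_add' := by
        intro v w
        simp only [Prod.fst_add, Prod.snd_add, map_add, LinearMap.add_apply, add_smul,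
          Prod.mk_add_mk, Prod.mk.injEq, add_zero, eq_self_iff_true, and_true]
        constructor <;> abel
      map_smul' := by
        intro s v
        simp only [Prod.smul_fst, Prod.smul_snd, map_smul, LinearMap.smul_apply,
          RingHom.id_apply, Prod.smul_mk, smul_eq_mul, mul_smul, smul_add, smul_zero,
          mul_zero] }
  map_add' := by
    intro a b
    refine LinearMap.ext fun v => ?_
    show (_, _, _) = ((_ : B × A × k) + (_, _, _))
    simp only [map_add, LinearMap.add_apply, LinearMap.coe_mk, AddHom.coe_mk,
      Prod.mk_add_mk, Prod.mk.injEq, smul_add, add_zero, eq_self_iff_true, and_true]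
    constructor <;> abel
  map_smul' := by
    intro s a
    refine LinearMap.ext fun v => ?_
    simp only [LinearMap.smul_apply]
    simp only [map_smul, LinearMap.smul_apply, LinearMap.coe_mk, AddHom.coe_mk,
      RingHom.id_apply, Prod.smul_mk, smul_add, smul_zero, smul_comm v.2.2 s]

end TDUaux

/-- Universal property of the tensor-algebra dialgebra `D(A) = (T(A), ⊢, ⊣)`:
for any left-symmetric dialgebra `B` and any left-symmetric algebra
homomorphism `τ : A → (B, ⊢)`, there is a unique dialgebra homomorphism
`φ : D(A) → B` with `φ ∘ ι = τ`; explicitly,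
`φ(a₁a₂…aₙ) = (…((τ a₁ ⊣ τ a₂) ⊣ …) ⊣ τ aₙ)`. -/
theorem tensor_dialgebra_universal (k A T B : Type) [Field k]
    [AddCommGroup A] [Module k A]
    [NonUnitalRing T] [Module k T] [IsScalarTower k T T] [SMulCommClass k T T]
    [AddCommGroup B] [Module k B]
    (mul : A →ₗ[k] A →ₗ[k] A)
    (lsym : ∀ a b c : A,
      mul (mul a b) c - mul a (mul b c) = mul (mul b a) c - mul b (mul a c))
    (ι : A →ₗ[k] T)
    (hgen : NonUnitalAlgebra.adjoin k (Set.range ι) = ⊤)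
    -- freeness of `T` as the non-unital tensor algebra of `A`
    (hfree : ∀ (C : Type) [NonUnitalRing C] [Module k C] [IsScalarTower k C C]
      [SMulCommClass k C C] (f : A →ₗ[k] C),
      ∃! g : T →ₗ[k] C, (∀ u v : T, g (u * v) = g u * g v) ∧ ∀ a : A, g (ι a) = f a)
    (M : T →ₗ[k] A)
    (hM1 : ∀ a : A, M (ι a) = a)
    (hM2 : ∀ (u : T) (a : A), M (u * ι a) = mul (M u) a)
    (vdT : T →ₗ[k] T →ₗ[k] T)
    (hv1 : ∀ (u : T) (a : A), vdT u (ι a) = ι (mul (M u) a))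
    (hv2 : ∀ (u w : T) (a : A),
      vdT u (w * ι a) = vdT u w * ι a + w * ι (mul (M u) a) - w * ι (M u) * ι a)
    -- the left-symmetric dialgebra `B`
    (vdB dvB : B →ₗ[k] B →ₗ[k] B)
    (hB1 : ∀ x y z : B, vdB (dvB x y) z = vdB (vdB x y) z)
    (hB2 : ∀ x y z : B, dvB x (vdB y z) = dvB x (dvB y z))
    (hB3 : ∀ x y z : B,
      dvB (dvB x y) z - dvB x (dvB y z) = dvB (vdB y x) z - vdB y (dvB x z))
    (hB4 : ∀ x y z : B,
      vdB (vdB x y) z - vdB x (vdB y z) = vdB (vdB y x) z - vdB y (vdB x z))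
    (τ : A →ₗ[k] B)
    (hτ : ∀ a b : A, τ (mul a b) = vdB (τ a) (τ b)) :
    (∃! φ : T →ₗ[k] B,
      (∀ u v : T, φ (vdT u v) = vdB (φ u) (φ v)) ∧
      (∀ u v : T, φ (u * ι (M v)) = dvB (φ u) (φ v)) ∧
      (∀ a : A, φ (ι a) = τ a)) ∧
    (∀ φ : T →ₗ[k] B,
      ((∀ u v : T, φ (vdT u v) = vdB (φ u) (φ v)) ∧
       (∀ u v : T, φ (u * ι (M v)) = dvB (φ u) (φ v)) ∧
       (∀ a : A, φ (ι a) = τ a)) →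
      ∀ (a : A) (l : List A),
        φ (List.foldl (fun t x => t * ι x) (ι a) l)
          = List.foldl (fun b x => dvB b (τ x)) (τ a) l) := by
  classical
  -- the fold formula holds for any dialgebra homomorphism extending τ
  have hpart2 : ∀ φ : T →ₗ[k] B,
      ((∀ u v : T, φ (vdT u v) = vdB (φ u) (φ v)) ∧
       (∀ u v : T, φ (u * ι (M v)) = dvB (φ u) (φ v)) ∧
       (∀ a : A, φ (ι a) = τ a)) →
      ∀ (a : A) (l : List A),
        φ (List.foldl (fun t x => t * ι x) (ι a) l)
          = List.foldl (fun b x => dvB b (τ x)) (τ a) l := by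
    rintro φ ⟨h1, h2, h3⟩ a l
    induction l using List.reverseRecOn with
    | nil => simpa using h3 a
    | append_singleton l c IH =>
      rw [List.foldl_append, List.foldl_append]
      simp only [List.foldl_cons, List.foldl_nil]
      have h2' := h2 (List.foldl (fun t x => t * ι x) (ι a) l) (ι c)
      rw [hM1] at h2'
      rw [h2', h3, IH]
  -- construct the representation on `B × A × k`
  obtain ⟨g, ⟨hgmul, hgι⟩, -⟩ :=
    hfree ((Module.End k (B × A × k))ᵐᵒᵖ)
      ((MulOpposite.opLinearEquiv k (M := Module.End k (B × A × k))).toLinearMap ∘ₗ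
        TDUE mul dvB τ)
  have hunopι : ∀ a : A, (g (ι a)).unop = TDUE mul dvB τ a := by
    intro a; rw [hgι]; rfl
  have hunopmul : ∀ (u : T) (c : A),
      (g (u * ι c)).unop = TDUE mul dvB τ c * (g u).unop := by
    intro u c
    rw [hgmul, hgι]
    rfl
  have hEapp : ∀ (a : A) (v : B × A × k),
      TDUE mul dvB τ a v = (dvB v.1 (τ a) + v.2.2 • τ a, mul v.2.1 a + v.2.2 • a, 0) :=
    fun _ _ => rfl
  -- the three coordinate maps
  let φ : T →ₗ[k] B :=
    { toFun := fun u => ((g u).unop ((0 : B), (0 : A), (1 : k))).1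
      map_add' := by intro u v; simp
      map_smul' := by intro s u; simp }
  let ρ : T →ₗ[k] A :=
    { toFun := fun u => ((g u).unop ((0 : B), (0 : A), (1 : k))).2.1
      map_add' := by intro u v; simp
      map_smul' := by intro s u; simp }
  let ζ : T →ₗ[k] k :=
    { toFun := fun u => ((g u).unop ((0 : B), (0 : A), (1 : k))).2.2
      map_add' := by intro u v; simp
      map_smul' := by intro s u; simp }
  -- values on generators
  have hφι : ∀ a : A, φ (ι a) = τ a := by
    intro a
    show ((g (ι a)).unop ((0 : B), (0 : A), (1 : k))).1 = τ a
    rw [hunopι, hEapp]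
    simp
  have hρι : ∀ a : A, ρ (ι a) = a := by
    intro a
    show ((g (ι a)).unop ((0 : B), (0 : A), (1 : k))).2.1 = a
    rw [hunopι, hEapp]
    simp
  have hζι : ∀ a : A, ζ (ι a) = 0 := by
    intro a
    show ((g (ι a)).unop ((0 : B), (0 : A), (1 : k))).2.2 = 0
    rw [hunopι, hEapp]
  have hζmul : ∀ (u : T) (c : A), ζ (u * ι c) = 0 := by
    intro u c
    show ((g (u * ι c)).unop ((0 : B), (0 : A), (1 : k))).2.2 = 0
    rw [hunopmul, Module.End.mul_apply, hEapp]
  have hζ0 : ∀ u : T, ζ u = 0 := by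
    have h : ζ = (0 : T →ₗ[k] k) := by
      apply TDUext ι hgen
      intro a l
      rw [LinearMap.zero_apply]
      induction l using List.reverseRecOn with
      | nil => exact hζι a
      | append_singleton l c IH => rw [TDUmon_concat]; exact hζmul _ c
    intro u; rw [h, LinearMap.zero_apply]
  have hpt : ∀ u : T, (g u).unop ((0 : B), (0 : A), (1 : k)) = (φ u, ρ u, (0 : k)) := by
    intro u
    refine Prod.ext rfl (Prod.ext rfl ?_)
    exact hζ0 u
  have hφmul : ∀ (u : T) (c : A), φ (u * ι c) = dvB (φ u) (τ c) := by
    intro u c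
    show ((g (u * ι c)).unop ((0 : B), (0 : A), (1 : k))).1 = dvB (φ u) (τ c)
    rw [hunopmul, Module.End.mul_apply, hpt, hEapp]
    simp
  have hρmul : ∀ (u : T) (c : A), ρ (u * ι c) = mul (ρ u) c := by
    intro u c
    show ((g (u * ι c)).unop ((0 : B), (0 : A), (1 : k))).2.1 = mul (ρ u) c
    rw [hunopmul, Module.End.mul_apply, hpt, hEapp]
    simp
  have hρM : ∀ u : T, ρ u = M u := by
    have h : ρ = M := by
      apply TDUext ι hgen
      intro a l
      induction l using List.reverseRecOn with
      | nil => show ρ (ι a) = M (ι a); rw [hρι, hM1]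
      | append_singleton l c IH => rw [TDUmon_concat, hρmul, hM2, IH]
    intro u; rw [h]
  -- the key comparison lemmas on monomials
  have hR : ∀ (a : A) (l : List A),
      (∀ x : B, dvB x (φ (TDUmon ι a l)) = dvB x (τ (M (TDUmon ι a l)))) ∧
      (∀ y : B, vdB (φ (TDUmon ι a l)) y = vdB (τ (M (TDUmon ι a l))) y) := by
    intro a l
    induction l using List.reverseRecOn with
    | nil =>
      constructor <;> intro x <;>
        · show _ = _
          rw [show TDUmon ι a [] = ι a from rfl, hφι, hM1]
    | append_singleton l c IH =>
      obtain ⟨IH1, IH2⟩ := IH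
      rw [TDUmon_concat]
      constructor
      · intro x
        calc dvB x (φ (TDUmon ι a l * ι c))
            = dvB x (dvB (φ (TDUmon ι a l)) (τ c)) := by rw [hφmul]
          _ = dvB x (vdB (φ (TDUmon ι a l)) (τ c)) := (hB2 x _ _).symm
          _ = dvB x (vdB (τ (M (TDUmon ι a l))) (τ c)) := by rw [IH2 (τ c)]
          _ = dvB x (τ (mul (M (TDUmon ι a l)) c)) := by rw [hτ]
          _ = dvB x (τ (M (TDUmon ι a l * ι c))) := by rw [hM2]
      · intro y
        calc vdB (φ (TDUmon ι a l * ι c)) y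
            = vdB (dvB (φ (TDUmon ι a l)) (τ c)) y := by rw [hφmul]
          _ = vdB (vdB (φ (TDUmon ι a l)) (τ c)) y := hB1 _ _ _
          _ = vdB (vdB (τ (M (TDUmon ι a l))) (τ c)) y := by rw [IH2 (τ c)]
          _ = vdB (τ (mul (M (TDUmon ι a l)) c)) y := by rw [hτ]
          _ = vdB (τ (M (TDUmon ι a l * ι c))) y := by rw [hM2]
  have hR1 : ∀ (v : T) (x : B), dvB x (φ v) = dvB x (τ (M v)) := by
    intro v x
    have h := TDUext ι hgen ((dvB x).comp φ) ((dvB x).comp (τ.comp M))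
      (fun a l => by
        simp only [LinearMap.comp_apply]
        exact (hR a l).1 x)
    simpa only [LinearMap.comp_apply] using LinearMap.congr_fun h v
  have hR2 : ∀ (v : T) (y : B), vdB (φ v) y = vdB (τ (M v)) y := by
    intro v y
    have h := TDUext ι hgen ((vdB.flip y).comp φ) ((vdB.flip y).comp (τ.comp M))
      (fun a l => by
        simp only [LinearMap.comp_apply, LinearMap.flip_apply]
        exact (hR a l).2 y)
    simpa only [LinearMap.comp_apply, LinearMap.flip_apply] using LinearMap.congr_fun h v
  -- φ is a homomorphism for ⊣
  have hφdv : ∀ u v : T, φ (u * ι (M v)) = dvB (φ u) (φ v) := by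
    intro u v
    rw [hφmul, ← hR1 v (φ u)]
  -- φ is a homomorphism for ⊢
  have hφvd : ∀ u v : T, φ (vdT u v) = vdB (φ u) (φ v) := by
    intro u v
    have hy : vdB (τ (M u)) = vdB (φ u) := LinearMap.ext fun z => (hR2 u z).symm
    have h := TDUext ι hgen (φ.comp (vdT u)) ((vdB (φ u)).comp φ) ?_
    · simpa only [LinearMap.comp_apply] using LinearMap.congr_fun h v
    intro a l
    simp only [LinearMap.comp_apply]
    induction l using List.reverseRecOn with
    | nil =>
      show φ (vdT u (ι a)) = vdB (φ u) (φ (ι a))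
      rw [hv1, hφι, hτ, hy, hφι]
    | append_singleton l c IH =>
      rw [TDUmon_concat]
      calc φ (vdT u (TDUmon ι a l * ι c))
          = φ (vdT u (TDUmon ι a l) * ι c) + φ (TDUmon ι a l * ι (mul (M u) c))
              - φ (TDUmon ι a l * ι (M u) * ι c) := by
            rw [hv2 u (TDUmon ι a l) c, map_sub, map_add]
        _ = dvB (vdB (φ u) (φ (TDUmon ι a l))) (τ c)
              + dvB (φ (TDUmon ι a l)) (dvB (φ u) (τ c))
              - dvB (dvB (φ (TDUmon ι a l)) (φ u)) (τ c) := by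
            rw [hφmul (vdT u (TDUmon ι a l)) c, IH]
            rw [hφmul (TDUmon ι a l) (mul (M u) c), hτ, hy, hB2]
            rw [hφmul (TDUmon ι a l * ι (M u)) c, hφmul (TDUmon ι a l) (M u),
              ← hR1 u (φ (TDUmon ι a l))]
        _ = vdB (φ u) (dvB (φ (TDUmon ι a l)) (τ c)) := by
            have h3 := hB3 (φ (TDUmon ι a l)) (φ u) (τ c)
            have h4 : vdB (φ u) (dvB (φ (TDUmon ι a l)) (τ c))
                = dvB (vdB (φ u) (φ (TDUmon ι a l))) (τ c)
                  - (dvB (dvB (φ (TDUmon ι a l)) (φ u)) (τ c)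
                    - dvB (φ (TDUmon ι a l)) (dvB (φ u) (τ c))) := by
              rw [h3, sub_sub_cancel]
            rw [h4]; abel
        _ = vdB (φ u) (φ (TDUmon ι a l * ι c)) := by rw [hφmul]
  -- conclusion
  refine ⟨⟨φ, ⟨hφvd, hφdv, hφι⟩, ?_⟩, hpart2⟩
  intro φ' hφ'
  apply TDUext ι hgen
  intro a l
  have h1 := hpart2 φ' hφ' a l
  have h2 := hpart2 φ ⟨hφvd, hφdv, hφι⟩ a l
  exact h1.trans h2.symm
end

section
/- Let (A, ∘) be an SLS-algebra. Define R(x, u₁, …, uₘ) = (…((x∘u₁)∘u₂)∘…)∘uₘ. Then for all x, y, u, u₁,…,uₘ, v₁,…,v_l ∈ A: (R(x,u₁,…,uₘ), R(y,v₁,…,v_l), u) = (R(y,u₁,…,uₘ), R(x,v₁,…,v_l), u), where (a,b,c) is the associator with respect to ∘. -/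
section Aux
variable {k A : Type} [Field k] [AddCommGroup A] [Module k A]
variable (mul : A →ₗ[k] A →ₗ[k] A)

private lemma SLS_foldl_congr {X X' : A} (h : ∀ q : A, mul X q = mul X' q) :
    ∀ (l : List A) (u : A),
      mul (l.foldl (fun t w => mul t w) X) u = mul (l.foldl (fun t w => mul t w) X') u
  | [], u => h u
  | a :: l, u => by
      simp only [List.foldl_cons]
      rw [h a]

private lemma SLS_rotate
    (sls1 : ∀ x y z u : A, mul (mul (mul x y) z) u = mul (mul (mul x z) y) u) :
    ∀ (l : List A) (y w u : A),
      mul (mul (l.foldl (fun t w => mul t w) y) w) u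
        = mul (l.foldl (fun t w => mul t w) (mul y w)) u
  | [], y, w, u => rfl
  | a :: l, y, w, u => by
      simp only [List.foldl_cons]
      rw [SLS_rotate sls1 l (mul y a) w u]
      exact SLS_foldl_congr mul (sls1 y a w) l u

private lemma SLS_key
    (lsym : ∀ a b c : A,
      mul (mul a b) c - mul a (mul b c) = mul (mul b a) c - mul b (mul a c))
    (sls1 : ∀ x y z u : A, mul (mul (mul x y) z) u = mul (mul (mul x z) y) u)
    (sls2 : ∀ x y z u : A,
      mul (mul x (mul y z)) u - mul x (mul (mul y z) u)
        = mul (mul y (mul x z)) u - mul y (mul (mul x z) u)) :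
    ∀ (us : List A) (x y u : A),
      mul (mul (us.foldl (fun t w => mul t w) x) y) u
        - mul (us.foldl (fun t w => mul t w) x) (mul y u)
      = mul (mul (us.foldl (fun t w => mul t w) y) x) u
        - mul (us.foldl (fun t w => mul t w) y) (mul x u)
  | [], x, y, u => lsym x y u
  | w :: l, x, y, u => by
      simp only [List.foldl_cons]
      rw [SLS_key lsym sls1 sls2 l (mul x w) y u]
      -- now: D(R(y,l), mul x w) = D(R(mul y w, l), x)
      rw [sls2 (l.foldl (fun t w => mul t w) y) x w u]
      -- now: D(x, mul (R(y,l)) w) = D(R(mul y w,l), x)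
      rw [lsym x (mul (l.foldl (fun t w => mul t w) y) w) u]
      -- terms: mul (mul b x) u - mul b (mul x u) with b = mul (R y l) w
      rw [SLS_rotate mul sls1 l y w (mul x u)]
      rw [sls1 (l.foldl (fun t w => mul t w) y) w x u]
      have h := SLS_rotate mul sls1 (l ++ [x]) y w u
      simp only [List.foldl_append, List.foldl_cons, List.foldl_nil] at h
      rw [h]

end Aux

/-- In an SLS-algebra, for left-normed words `R(x,u₁,…,uₘ)` one has
`(R(x,u₁,…,uₘ), R(y,v₁,…,v_l), u) = (R(y,u₁,…,uₘ), R(x,v₁,…,v_l), u)`. -/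
theorem SLS_long_identity (k A : Type) [Field k] [AddCommGroup A] [Module k A]
    (mul : A →ₗ[k] A →ₗ[k] A)
    (lsym : ∀ a b c : A,
      mul (mul a b) c - mul a (mul b c) = mul (mul b a) c - mul b (mul a c))
    (sls1 : ∀ x y z u : A,
      mul (mul (mul x y) z) u = mul (mul (mul x z) y) u)
    (sls2 : ∀ x y z u : A,
      mul (mul x (mul y z)) u - mul x (mul (mul y z) u)
        = mul (mul y (mul x z)) u - mul y (mul (mul x z) u)) :
    ∀ (x y u : A) (us vs : List A),
      mul (mul (us.foldl (fun t w => mul t w) x) (vs.foldl (fun t w => mul t w) y)) u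
        - mul (us.foldl (fun t w => mul t w) x)
            (mul (vs.foldl (fun t w => mul t w) y) u)
      = mul (mul (us.foldl (fun t w => mul t w) y) (vs.foldl (fun t w => mul t w) x)) u
        - mul (us.foldl (fun t w => mul t w) y)
            (mul (vs.foldl (fun t w => mul t w) x) u) := by
  intro x y u us vs
  induction vs using List.reverseRecOn generalizing us with
  | nil =>
      simpa using SLS_key mul lsym sls1 sls2 us x y u
  | append_singleton l w ih =>
      simp only [List.foldl_append, List.foldl_cons, List.foldl_nil]
      set Rx := us.foldl (fun t w => mul t w) x with hRx
      set Ry := us.foldl (fun t w => mul t w) y with hRy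
      set Sx := l.foldl (fun t w => mul t w) x with hSx
      set Sy := l.foldl (fun t w => mul t w) y with hSy
      rw [sls2 Rx Sy w u, lsym Sy (mul Rx w) u, sls2 Ry Sx w u, lsym Sx (mul Ry w) u]
      have h := ih (us ++ [w])
      simp only [List.foldl_append, List.foldl_cons, List.foldl_nil, ← hRx, ← hRy,
        ← hSx, ← hSy] at h
      exact h
end

section
/- Let P be a Perm-algebra with derivation d, and define a∘b = a·d(b). Then the left-multiplication operator L_{d(x)}: a ↦ d(x)·a satisfies L_{d(x)}(a∘b) = (a∘x)∘b for all a,b,x ∈ P. Consequently, in P regarded as an SLS-algebra via ∘, for any finite families (aᵢ), (bᵢ) with Σᵢ aᵢ∘bᵢ = 0, one has Σᵢ (aᵢ∘x)∘bᵢ = 0 for every x ∈ P. -/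
/-- In a differential Perm-algebra with `a ∘ b = a * d b`, left multiplication by
`d x` satisfies `d x * (a ∘ b) = (a ∘ x) ∘ b`; consequently any special
left-symmetric algebra is "nice": `Σ aᵢ ∘ bᵢ = 0` implies `Σ (aᵢ∘x) ∘ bᵢ = 0`. -/
theorem perm_der_nice (k P : Type) [Field k] [NonUnitalRing P]
    [Module k P] [IsScalarTower k P P] [SMulCommClass k P P]
    (perm : ∀ a b c : P, a * b * c = b * a * c)
    (d : P →ₗ[k] P) (hd : ∀ a b : P, d (a * b) = d a * b + a * d b) :
    (∀ a b x : P, d x * (a * d b) = (a * d x) * d b) ∧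
    (∀ (n : ℕ) (a b : Fin n → P) (x : P),
      (∑ i, a i * d (b i)) = 0 → (∑ i, (a i * d x) * d (b i)) = 0) := by
  have key : ∀ a b x : P, d x * (a * d b) = (a * d x) * d b := fun a b x => by
    rw [← mul_assoc, perm]
  refine ⟨key, fun n a b x h => ?_⟩
  calc (∑ i, (a i * d x) * d (b i)) = ∑ i, d x * (a i * d (b i)) := by
        simp_rw [key]
    _ = d x * ∑ i, a i * d (b i) := by rw [Finset.mul_sum]
    _ = 0 := by rw [h, mul_zero]
end

section
/- Let V be a vector space and A = T(V)/I where T(V) is the non-unital tensor algebra and I is the ideal spanned by all a₀a₁…aₙa_{n+1} − a₀a_{σ(1)}…a_{σ(n)}a_{n+1} for aᵢ ∈ V, σ ∈ Sₙ. Then A is an associative algebra satisfying the SLS identities ((xy)z)u = ((xz)y)u and (x, yz, u) = (y, xz, u) (associators with respect to the associative product). -/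
/-- Let `T = T(V)` be the non-unital tensor algebra of a vector space `V`
(modelled by a non-unital associative algebra generated by a linear embedding
`ι : V → T`) and let `I` be the two-sided ideal spanned by all elements
`a₀a₁…aₙa_{n+1} - a₀a_{σ(1)}…a_{σ(n)}a_{n+1}` (`σ ∈ Sₙ`, encoded via
permutations of lists). Then `A = T/I` is associative and satisfies the
SLS-identities `((xy)z)u = ((xz)y)u` and `(x,yz,u) = (y,xz,u)` (i.e. these hold
modulo `I` in `T`). -/
theorem tensor_quotient_SLS (k V T : Type) [Field k]
    [AddCommGroup V] [Module k V]
    [NonUnitalRing T] [Module k T] [IsScalarTower k T T] [SMulCommClass k T T]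
    (ι : V →ₗ[k] T)
    (hgen : NonUnitalAlgebra.adjoin k (Set.range ι) = ⊤)
    (S : Set T)
    (hS : S = {t : T | ∃ (a₀ a₁ : V) (l l' : List V), l.Perm l' ∧
      t = List.foldl (fun s v => s * ι v) (ι a₀) (l ++ [a₁])
        - List.foldl (fun s v => s * ι v) (ι a₀) (l' ++ [a₁])})
    (I : Submodule k T)
    (hI : I = Submodule.span k
      {t : T | ∃ g ∈ S, t = g ∨ (∃ u : T, t = u * g) ∨ (∃ v : T, t = g * v) ∨
        ∃ u v : T, t = u * g * v}) :
    (∀ x y z : T, (x * y) * z - x * (y * z) ∈ I) ∧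
    (∀ x y z u : T, ((x * y) * z) * u - ((x * z) * y) * u ∈ I) ∧
    (∀ x y z u : T,
      ((x * (y * z)) * u - x * ((y * z) * u))
        - ((y * (x * z)) * u - y * ((x * z) * u)) ∈ I) := by
  -- induction principle from hgen
  have ind : ∀ (p : T → Prop), (∀ a : V, p (ι a)) →
      (∀ x y, p x → p y → p (x + y)) → p 0 →
      (∀ x y, p x → p y → p (x * y)) → (∀ (r : k) x, p x → p (r • x)) →
      ∀ x, p x := by
    intro p hmem hadd h0 hmul hsmul x
    have hx : x ∈ NonUnitalAlgebra.adjoin k (Set.range ι) := by rw [hgen]; trivial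
    induction hx using NonUnitalAlgebra.adjoin_induction with
    | mem x hx => obtain ⟨a, rfl⟩ := hx; exact hmem a
    | add x y _ _ hx hy => exact hadd x y hx hy
    | zero => exact h0
    | mul x y _ _ hx hy => exact hmul x y hx hy
    | smul r x _ hx => exact hsmul r x hx
  -- I is a two-sided ideal
  have hleft : ∀ (u t : T), t ∈ I → u * t ∈ I := by
    intro u t ht
    rw [hI] at ht ⊢
    induction ht using Submodule.span_induction with
    | mem t htG =>
      apply Submodule.subset_span
      obtain ⟨g, hg, h⟩ := htG
      refine ⟨g, hg, ?_⟩
      rcases h with rfl | ⟨u', rfl⟩ | ⟨v, rfl⟩ | ⟨u', v, rfl⟩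
      · exact Or.inr (Or.inl ⟨u, rfl⟩)
      · exact Or.inr (Or.inl ⟨u * u', (mul_assoc u u' g).symm⟩)
      · exact Or.inr (Or.inr (Or.inr ⟨u, v, (mul_assoc u g v).symm⟩))
      · exact Or.inr (Or.inr (Or.inr ⟨u * u', v,
          by rw [mul_assoc u u' g, mul_assoc u (u' * g) v]⟩))
    | zero => simp
    | add a b _ _ ha hb => rw [mul_add]; exact Submodule.add_mem _ ha hb
    | smul r a _ ha => rw [mul_smul_comm]; exact Submodule.smul_mem _ _ ha
  have hright : ∀ (t v : T), t ∈ I → t * v ∈ I := by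
    intro t v ht
    rw [hI] at ht ⊢
    induction ht using Submodule.span_induction with
    | mem t htG =>
      apply Submodule.subset_span
      obtain ⟨g, hg, h⟩ := htG
      refine ⟨g, hg, ?_⟩
      rcases h with rfl | ⟨u', rfl⟩ | ⟨v', rfl⟩ | ⟨u', v', rfl⟩
      · exact Or.inr (Or.inr (Or.inl ⟨v, rfl⟩))
      · exact Or.inr (Or.inr (Or.inr ⟨u', v, rfl⟩))
      · exact Or.inr (Or.inr (Or.inl ⟨v' * v, mul_assoc g v' v⟩))
      · exact Or.inr (Or.inr (Or.inr ⟨u', v' * v, mul_assoc (u' * g) v' v⟩))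
    | zero => simp
    | add a b _ _ ha hb => rw [add_mul]; exact Submodule.add_mem _ ha hb
    | smul r a _ ha => rw [smul_mul_assoc]; exact Submodule.smul_mem _ _ ha
  -- base case: generators
  have hbase : ∀ a b c d : V, ι c * ι a * ι b * ι d - ι c * ι b * ι a * ι d ∈ I := by
    intro a b c d
    rw [hI]
    apply Submodule.subset_span
    refine ⟨_, ?_, Or.inl rfl⟩
    rw [hS]
    exact ⟨c, d, [a, b], [b, a], List.Perm.swap b a [], by simp⟩
  -- swap two single letters, arbitrary outer factors
  have step2 : ∀ (a b : V) (x u : T),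
      x * ι a * ι b * u - x * ι b * ι a * u ∈ I := by
    intro a b x
    refine ind (fun x => ∀ u, x * ι a * ι b * u - x * ι b * ι a * u ∈ I)
      ?_ ?_ ?_ ?_ ?_ x
    · intro a' u
      refine ind (fun u => ι a' * ι a * ι b * u - ι a' * ι b * ι a * u ∈ I)
        ?_ ?_ ?_ ?_ ?_ u
      · intro d; exact hbase a b a' d
      · intro u₁ u₂ h₁ h₂
        simp only [mul_add]
        rw [← sub_add_sub_comm]
        exact Submodule.add_mem _ h₁ h₂
      · simp
      · intro u₁ u₂ h₁ _
        rw [← mul_assoc, ← mul_assoc, ← sub_mul]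
        exact hright _ _ h₁
      · intro r u h
        rw [mul_smul_comm, mul_smul_comm, ← smul_sub]
        exact Submodule.smul_mem _ _ h
    · intro x₁ x₂ h₁ h₂ u
      simp only [add_mul]
      rw [← sub_add_sub_comm]
      exact Submodule.add_mem _ (h₁ u) (h₂ u)
    · intro u; simp
    · intro x₁ x₂ _ h₂ u
      have := hleft x₁ _ (h₂ u)
      rw [mul_sub] at this
      simpa only [← mul_assoc] using this
    · intro r x h u
      simp only [smul_mul_assoc]
      rw [← smul_sub]
      exact Submodule.smul_mem _ _ (h u)
  -- swap a single letter with an arbitrary element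
  have step1 : ∀ (a : V) (z x u : T),
      x * ι a * z * u - x * z * ι a * u ∈ I := by
    intro a z
    refine ind (fun z => ∀ x u, x * ι a * z * u - x * z * ι a * u ∈ I)
      ?_ ?_ ?_ ?_ ?_ z
    · intro b; exact step2 a b
    · intro z₁ z₂ h₁ h₂ x u
      simp only [mul_add, add_mul]
      rw [← sub_add_sub_comm]
      exact Submodule.add_mem _ (h₁ x u) (h₂ x u)
    · intro x u; simp
    · intro z₁ z₂ h₁ h₂
      intro x u
      have e₁ := h₁ x (z₂ * u)
      have e₂ := h₂ (x * z₁) u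
      simp only [← mul_assoc] at e₁ e₂
      have := Submodule.add_mem _ e₁ e₂
      rw [sub_add_sub_cancel] at this
      simpa only [← mul_assoc] using this
    · intro r z h x u
      simp only [mul_smul_comm, smul_mul_assoc]
      rw [← smul_sub]
      exact Submodule.smul_mem _ _ (h x u)
  -- full swap
  have main : ∀ (y x z u : T), x * y * z * u - x * z * y * u ∈ I := by
    intro y
    refine ind (fun y => ∀ x z u, x * y * z * u - x * z * y * u ∈ I)
      ?_ ?_ ?_ ?_ ?_ y
    · intro a x z u; exact step1 a z x u
    · intro y₁ y₂ h₁ h₂ x z u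
      simp only [mul_add, add_mul]
      rw [← sub_add_sub_comm]
      exact Submodule.add_mem _ (h₁ x z u) (h₂ x z u)
    · intro x z u; simp
    · intro y₁ y₂ h₁ h₂ x z u
      have e₁ := h₂ (x * y₁) z u
      have e₂ := h₁ x z (y₂ * u)
      simp only [← mul_assoc] at e₁ e₂
      have := Submodule.add_mem _ e₁ e₂
      rw [sub_add_sub_cancel] at this
      simpa only [← mul_assoc] using this
    · intro r y h x z u
      simp only [mul_smul_comm, smul_mul_assoc]
      rw [← smul_sub]
      exact Submodule.smul_mem _ _ (h x z u)
  refine ⟨fun x y z => by simp [mul_assoc], fun x y z u => main y x z u,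
    fun x y z u => by simp [mul_assoc]⟩
end

section
/- Let (A, ∘) be a nice SLS-algebra, T(A) its non-unital tensor algebra with M(a₁…aₙ) = ((a₁∘a₂)∘…)∘aₙ, and K = {f ∈ T(A) : M(afb) = 0 for all a,b ∈ A}. Then for all x,y,z ∈ A the element h(x,y,z) = xyz + (x∘z)∘y − (x∘y)z − (x∘z)y belongs to K, i.e., M(a·h(x,y,z)·b) = 0 for all a,b ∈ A. -/
/-- For a nice SLS-algebra `(A, ∘)` with non-unital tensor algebra `T(A)` and
`M(a₁…aₙ) = ((a₁∘a₂)∘…)∘aₙ`, the element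
`h(x,y,z) = xyz + (x∘z)∘y - (x∘y)z - (x∘z)y` lies in
`K = {f : M(afb) = 0 ∀ a,b ∈ A}`. -/
theorem h_in_K (k A T : Type) [Field k]
    [AddCommGroup A] [Module k A]
    [NonUnitalRing T] [Module k T] [IsScalarTower k T T] [SMulCommClass k T T]
    (mul : A →ₗ[k] A →ₗ[k] A)
    (lsym : ∀ a b c : A,
      mul (mul a b) c - mul a (mul b c) = mul (mul b a) c - mul b (mul a c))
    (sls1 : ∀ x y z u : A,
      mul (mul (mul x y) z) u = mul (mul (mul x z) y) u)
    (sls2 : ∀ x y z u : A,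
      mul (mul x (mul y z)) u - mul x (mul (mul y z) u)
        = mul (mul y (mul x z)) u - mul y (mul (mul x z) u))
    -- `A` is nice
    (nice : ∀ (n : ℕ) (a b : Fin n → A) (x : A),
      (∑ i, mul (a i) (b i)) = 0 → (∑ i, mul (mul (a i) x) (b i)) = 0)
    (ι : A →ₗ[k] T)
    (hgen : NonUnitalAlgebra.adjoin k (Set.range ι) = ⊤)
    (M : T →ₗ[k] A)
    (hM1 : ∀ a : A, M (ι a) = a)
    (hM2 : ∀ (u : T) (a : A), M (u * ι a) = mul (M u) a) :
    ∀ x y z a b : A,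
      M (ι a * (ι x * ι y * ι z + ι (mul (mul x z) y)
        - ι (mul x y) * ι z - ι (mul x z) * ι y) * ι b) = 0 := by
  intro x y z a b
  have hre : ι a * (ι x * ι y * ι z + ι (mul (mul x z) y)
        - ι (mul x y) * ι z - ι (mul x z) * ι y) * ι b
      = ι a * ι x * ι y * ι z * ι b + ι a * ι (mul (mul x z) y) * ι b
        - ι a * ι (mul x y) * ι z * ι b - ι a * ι (mul x z) * ι y * ι b := by
    noncomm_ring
  rw [hre, map_sub, map_sub, map_add]
  simp only [hM2, hM1]
  -- goal in A
  have e1 : mul (mul (mul (mul a x) y) z) b - mul (mul (mul a (mul x y)) z) b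
      = mul (mul (mul (mul x a) y) z) b - mul (mul (mul x (mul a y)) z) b := by
    have h := congrArg (fun t => mul (mul t z) b) (lsym a x y)
    simpa [map_sub, LinearMap.sub_apply] using h
  have e2 : mul (mul (mul a (mul x z)) y) b - mul (mul a (mul (mul x z) y)) b
      = mul (mul (mul (mul x z) a) y) b - mul (mul (mul x z) (mul a y)) b := by
    have h := congrArg (fun t => mul t b) (lsym a (mul x z) y)
    simpa [map_sub, LinearMap.sub_apply] using h
  have s1 : mul (mul (mul (mul x a) y) z) b = mul (mul (mul (mul x z) a) y) b := by
    rw [sls1 (mul x a) y z b]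
    exact congrArg (fun t => mul t b) (sls1 x a z y)
  have s2 : mul (mul (mul x (mul a y)) z) b = mul (mul (mul x z) (mul a y)) b :=
    sls1 x (mul a y) z b
  have key : mul (mul (mul (mul a x) y) z) b + mul (mul a (mul (mul x z) y)) b
      - mul (mul (mul a (mul x y)) z) b - mul (mul (mul a (mul x z)) y) b
      = (mul (mul (mul (mul a x) y) z) b - mul (mul (mul a (mul x y)) z) b)
        - (mul (mul (mul a (mul x z)) y) b - mul (mul a (mul (mul x z) y)) b) := by
    abel
  rw [key, e1, e2, s1, s2]
  abel
end

section
/- Let (A, ∘) be a left-symmetric algebra and M: T(A) → A as above. If f ∈ T(A) satisfies M(afb) = 0 for all a,b ∈ A, then M(uf) also satisfies M(a·M(uf)·b) = 0 for all a,b ∈ A and any u ∈ T(A); in particular M(uf)∘x = 0 for all x ∈ A implies (a∘M(uf))∘b = 0 via left symmetry. -/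
/-- For a left-symmetric algebra `(A, ∘)` with non-unital tensor algebra `T(A)`
and `M(a₁…aₙ) = ((a₁∘a₂)∘…)∘aₙ`: if `f ∈ T(A)` satisfies `M(afb) = 0` for all
`a, b ∈ A`, then for every `u ∈ T(A)` the element `M(uf) ∈ A` satisfies
`M(uf) ∘ x = 0` for all `x ∈ A` and `M(a·M(uf)·b) = (a ∘ M(uf)) ∘ b = 0` for
all `a, b ∈ A`. -/
theorem M_uf_in_K (k A T : Type) [Field k]
    [AddCommGroup A] [Module k A]
    [NonUnitalRing T] [Module k T] [IsScalarTower k T T] [SMulCommClass k T T]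
    (mul : A →ₗ[k] A →ₗ[k] A)
    (lsym : ∀ a b c : A,
      mul (mul a b) c - mul a (mul b c) = mul (mul b a) c - mul b (mul a c))
    (ι : A →ₗ[k] T)
    (hgen : NonUnitalAlgebra.adjoin k (Set.range ι) = ⊤)
    (M : T →ₗ[k] A)
    (hM1 : ∀ a : A, M (ι a) = a)
    (hM2 : ∀ (u : T) (a : A), M (u * ι a) = mul (M u) a)
    (f : T)
    (hf : ∀ a b : A, M (ι a * f * ι b) = 0) :
    ∀ u : T,
      (∀ x : A, mul (M (u * f)) x = 0) ∧
      (∀ a b : A, M (ι a * ι (M (u * f)) * ι b) = 0) ∧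
      (∀ a b : A, mul (mul a (M (u * f))) b = 0) := by
  -- Key identity: M (u * v) = M (ι (M u) * v) for all u v.
  have key : ∀ v u : T, M (u * v) = M (ι (M u) * v) := by
    intro v
    have hv : v ∈ NonUnitalAlgebra.adjoin k (Set.range ι) := hgen ▸ trivial
    induction hv using NonUnitalAlgebra.adjoin_induction with
    | mem x hx =>
      obtain ⟨a, rfl⟩ := hx
      intro u
      rw [hM2, hM2, hM1]
    | add x y hx hy px py =>
      intro u
      rw [mul_add, mul_add, map_add, map_add, px, py]
    | zero => intro u; rw [mul_zero, mul_zero]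
    | mul x y hx hy px py =>
      intro u
      calc M (u * (x * y)) = M ((u * x) * y) := by rw [mul_assoc]
        _ = M (ι (M (u * x)) * y) := py _
        _ = M (ι (M (ι (M u) * x)) * y) := by rw [px]
        _ = M ((ι (M u) * x) * y) := (py _).symm
        _ = M (ι (M u) * (x * y)) := by rw [mul_assoc]
    | smul r x hx px =>
      intro u
      rw [mul_smul_comm, mul_smul_comm, map_smul, map_smul, px]
  -- hence M (u * f * ι b) = 0 for all u b
  have hufb : ∀ (u : T) (b : A), M (u * f * ι b) = 0 := by
    intro u b
    rw [mul_assoc, key (f * ι b) u, ← mul_assoc]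
    exact hf _ b
  intro u
  have h1 : ∀ x : A, mul (M (u * f)) x = 0 := by
    intro x
    rw [← hM2, hufb]
  have h3 : ∀ a b : A, mul (mul a (M (u * f))) b = 0 := by
    intro a b
    have h2 := lsym a (M (u * f)) b
    simp [h1] at h2
    simpa using h2
  exact ⟨h1, fun a b => by rw [hM2, hM2, hM1]; exact h3 a b, h3⟩
end
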